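/- arXiv:1905.09487 — 5 statements merged into one kernel-verified Lean document; each statement's English description precedes it below -/
import Mathlib

section
/- If f₁ and f₂ are linearly independent analytic solutions of f'' + a f = 0 on a domain Ω (a analytic on Ω), then the functions f₁², f₁f₂, f₂² are linearly independent and satisfy the third-order equation g''' + 4a g' + 2a' g = 0. -/
/-!
Writing `g = u v` for two solutions of `f'' + a f = 0`, the equation gives `g'' = -2 a g + 2 u' v'`,
and differentiating once more `g''' = -2 a' g - 2 a g' + 2 (u'' v' + u' v'') = -2 a' g - 4 a g'`.

For independence, a binary quadratic form over `ℂ` splits into two linear forms, so a relation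
`c₀ f₁² + c₁ f₁ f₂ + c₂ f₂² = 0` says that a product of two linear combinations of `f₁, f₂`
vanishes on `Ω`. By the identity theorem one factor vanishes on the connected set `Ω`, hence is
the zero form by the independence of `f₁, f₂`, and then so is the quadratic form.
-/

open Polynomial in
theorem IsAlgClosed.exists_quadratic_form_eq_mul {K : Type*} [Field K] [IsAlgClosed K]
    (c₀ c₁ c₂ : K) : ∃ p q r s : K,
      ∀ x y : K, c₀ * x ^ 2 + c₁ * (x * y) + c₂ * y ^ 2 = (p * x + q * y) * (r * x + s * y) := by
  by_cases hc₀ : c₀ = 0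
  · exact ⟨0, 1, c₁, c₂, fun x y => by subst hc₀; ring⟩
  obtain ⟨t, ht⟩ := IsAlgClosed.exists_root (C c₀ * X ^ 2 + C c₁ * X + C c₂)
    (by rw [degree_quadratic hc₀]; decide)
  simp only [IsRoot, eval_add, eval_mul, eval_C, eval_pow, eval_X] at ht
  exact ⟨1, -t, c₀, c₁ + c₀ * t, fun x y => by linear_combination y ^ 2 * ht⟩

theorem quadratic_form_coeffs_eq_zero {R : Type*} [CommRing R] {c₀ c₁ c₂ : R}
    (h : ∀ x y : R, c₀ * x ^ 2 + c₁ * (x * y) + c₂ * y ^ 2 = 0) : c₀ = 0 ∧ c₁ = 0 ∧ c₂ = 0 := by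
  have h₀ := h 1 0
  have h₂ := h 0 1
  have h₁ := h 1 1
  norm_num at h₀ h₂ h₁
  exact ⟨h₀, by linear_combination h₁ - h₀ - h₂, h₂⟩

theorem mul_solves_third_order_of_solves_second_order {𝕜 : Type*} [NontriviallyNormedField 𝕜]
    [CompleteSpace 𝕜] {U : Set 𝕜} {a u v : 𝕜 → 𝕜} (hU : IsOpen U)
    (ha : AnalyticOnNhd 𝕜 a U) (hu : AnalyticOnNhd 𝕜 u U) (hv : AnalyticOnNhd 𝕜 v U)
    (hu₂ : ∀ z ∈ U, deriv (deriv u) z + a z * u z = 0)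
    (hv₂ : ∀ z ∈ U, deriv (deriv v) z + a z * v z = 0) :
    ∀ z ∈ U, iteratedDeriv 3 (fun z => u z * v z) z
      + 4 * a z * deriv (fun z => u z * v z) z + 2 * deriv a z * (u z * v z) = 0 := by
  have hd {f : 𝕜 → 𝕜} (hf : AnalyticOnNhd 𝕜 f U) {z} (hz : z ∈ U) : HasDerivAt f (deriv f z) z :=
    (hf z hz).differentiableAt.hasDerivAt
  have hu' := hu.deriv
  have hv' := hv.deriv
  have h₁ : U.EqOn (deriv fun z => u z * v z) (fun z => deriv u z * v z + u z * deriv v z) :=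
    fun z hz => ((hd hu hz).mul (hd hv hz)).deriv
  have h₂ : U.EqOn (deriv (deriv fun z => u z * v z))
      (fun z => -2 * a z * (u z * v z) + 2 * (deriv u z * deriv v z)) := by
    intro z hz
    rw [h₁.deriv hU hz]
    refine (((hd hu' hz).mul (hd hv hz)).add ((hd hu hz).mul (hd hv' hz))).deriv.trans ?_
    linear_combination v z * hu₂ z hz + u z * hv₂ z hz
  intro z hz
  have h₃ : deriv (deriv (deriv fun z => u z * v z)) z
      = -2 * deriv a z * (u z * v z) - 4 * a z * (deriv u z * v z + u z * deriv v z) := by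
    rw [h₂.deriv hU hz]
    refine ((((hd ha hz).const_mul (-2)).mul ((hd hu hz).mul (hd hv hz))).add
      (((hd hu' hz).mul (hd hv' hz)).const_mul 2)).deriv.trans ?_
    rw [Pi.mul_apply]
    linear_combination 2 * deriv v z * hu₂ z hz + 2 * deriv u z * hv₂ z hz
  rw [iteratedDeriv_succ, iteratedDeriv_succ, iteratedDeriv_one, h₃, h₁ hz]
  ring

theorem quadratic_relation_eq_zero_of_linear_independent {𝕜 : Type*} [NontriviallyNormedField 𝕜]
    [IsAlgClosed 𝕜] {U : Set 𝕜} (hU : IsPreconnected U) {f₁ f₂ : 𝕜 → 𝕜}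
    (hf₁ : AnalyticOnNhd 𝕜 f₁ U) (hf₂ : AnalyticOnNhd 𝕜 f₂ U)
    (hli : ∀ c₁ c₂ : 𝕜, (∀ z ∈ U, c₁ * f₁ z + c₂ * f₂ z = 0) → c₁ = 0 ∧ c₂ = 0)
    {c₀ c₁ c₂ : 𝕜} (h : ∀ z ∈ U, c₀ * f₁ z ^ 2 + c₁ * (f₁ z * f₂ z) + c₂ * f₂ z ^ 2 = 0) :
    c₀ = 0 ∧ c₁ = 0 ∧ c₂ = 0 := by
  obtain ⟨p, q, r, s, hfactor⟩ := IsAlgClosed.exists_quadratic_form_eq_mul c₀ c₁ c₂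
  have hcomb (α β : 𝕜) : AnalyticOnNhd 𝕜 (fun z => α * f₁ z + β * f₂ z) U :=
    (analyticOnNhd_const.mul hf₁).add (analyticOnNhd_const.mul hf₂)
  have hprod : ∀ z ∈ U, (p * f₁ z + q * f₂ z) * (r * f₁ z + s * f₂ z) = 0 :=
    fun z hz => hfactor _ _ ▸ h z hz
  refine quadratic_form_coeffs_eq_zero fun x y => hfactor x y ▸ ?_
  rcases (hcomb p q).eq_zero_or_eq_zero_of_mul_eq_zero (hcomb r s) hprod hU with h₁ | h₂
  · obtain ⟨rfl, rfl⟩ := hli p q h₁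
    ring
  · obtain ⟨rfl, rfl⟩ := hli r s h₂
    ring

theorem squares_solve_third_order (Ω : Set ℂ) (hΩ : IsOpen Ω) (hconn : IsConnected Ω)
    (a f₁ f₂ : ℂ → ℂ) (ha : AnalyticOn ℂ a Ω)
    (hf₁ : AnalyticOn ℂ f₁ Ω) (hf₂ : AnalyticOn ℂ f₂ Ω)
    (hode₁ : ∀ z ∈ Ω, deriv (deriv f₁) z + a z * f₁ z = 0)
    (hode₂ : ∀ z ∈ Ω, deriv (deriv f₂) z + a z * f₂ z = 0)
    (hli : ∀ c₁ c₂ : ℂ, (∀ z ∈ Ω, c₁ * f₁ z + c₂ * f₂ z = 0) → c₁ = 0 ∧ c₂ = 0) :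
    (∀ g ∈ ({fun z => f₁ z ^ 2, fun z => f₁ z * f₂ z, fun z => f₂ z ^ 2} :
        Set (ℂ → ℂ)),
      ∀ z ∈ Ω, iteratedDeriv 3 g z + 4 * a z * deriv g z + 2 * deriv a z * g z = 0) ∧
    (∀ c₀ c₁ c₂ : ℂ,
      (∀ z ∈ Ω, c₀ * f₁ z ^ 2 + c₁ * (f₁ z * f₂ z) + c₂ * f₂ z ^ 2 = 0) →
        c₀ = 0 ∧ c₁ = 0 ∧ c₂ = 0) := by
  rw [hΩ.analyticOn_iff_analyticOnNhd] at ha hf₁ hf₂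
  refine ⟨?_, fun c₀ c₁ c₂ =>
    quadratic_relation_eq_zero_of_linear_independent hconn.isPreconnected hf₁ hf₂ hli⟩
  have hsq (f : ℂ → ℂ) : (fun z => f z ^ 2) = fun z => f z * f z := funext fun z => sq (f z)
  rintro g (rfl | rfl | rfl)
  · rw [hsq]
    exact mul_solves_third_order_of_solves_second_order hΩ ha hf₁ hf₁ hode₁ hode₁
  · exact mul_solves_third_order_of_solves_second_order hΩ ha hf₁ hf₂ hode₁ hode₂
  · rw [hsq]
    exact mul_solves_third_order_of_solves_second_order hΩ ha hf₂ hf₂ hode₂ hode₂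
end

section
/- If f₁ and f₂ are linearly independent analytic solutions of f'' + a f = 0 on a domain Ω, then f₁³, f₁²f₂, f₁f₂², f₂³ are linearly independent solutions of the fourth-order equation g⁽⁴⁾ + 10a g'' + 10a' g' + (3a'' + 9a²) g = 0. -/
/-!
For solutions `u, v, w` of `y'' + a y = 0`, the sums `y₀ = uvw`, `y₁ = u'vw + uv'w + uvw'`,
`y₂ = u'v'w + u'vw' + uv'w'`, `y₃ = u'v'w'` satisfy a linear first-order system, because
`u'' = -a u` turns the derivative of each sum back into these sums. Eliminating `y₁, y₂, y₃`
gives the fourth-order equation for `y₀`.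

Conversely, a linear relation among the four cubes propagates through the system to the
corresponding relations among all four sums. At a point where the Wronskian `f₁ f₂' - f₂ f₁'` is
nonzero (there is one: otherwise `f₂ / f₁` is locally constant, and by the identity theorem
`f₁, f₂` are proportional) these four relations form an invertible linear system for the
coefficients.
-/

open Set Filter Topology Metric

section System

variable {𝕜 : Type*} [NontriviallyNormedField 𝕜] {a : 𝕜 → 𝕜} {s : Set 𝕜}

/-- `(y, y')` solves `y'' + a y = 0` on `s`. -/
structure IsSolutionOn (a : 𝕜 → 𝕜) (s : Set 𝕜) (y y' : 𝕜 → 𝕜) : Prop where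
  hasDerivAt : ∀ z ∈ s, HasDerivAt y (y' z) z
  hasDerivAt_deriv : ∀ z ∈ s, HasDerivAt y' (-(a z * y z)) z

structure IsSymCubeSolutionOn (a : 𝕜 → 𝕜) (s : Set 𝕜) (y₀ y₁ y₂ y₃ : 𝕜 → 𝕜) : Prop where
  hasDerivAt₀ : ∀ z ∈ s, HasDerivAt y₀ (y₁ z) z
  hasDerivAt₁ : ∀ z ∈ s, HasDerivAt y₁ (2 * y₂ z - 3 * a z * y₀ z) z
  hasDerivAt₂ : ∀ z ∈ s, HasDerivAt y₂ (3 * y₃ z - 2 * a z * y₁ z) z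
  hasDerivAt₃ : ∀ z ∈ s, HasDerivAt y₃ (-(a z * y₂ z)) z

theorem IsSolutionOn.isSymCubeSolutionOn {u u' v v' w w' : 𝕜 → 𝕜} (hu : IsSolutionOn a s u u')
    (hv : IsSolutionOn a s v v') (hw : IsSolutionOn a s w w') :
    IsSymCubeSolutionOn a s (fun z => u z * v z * w z)
      (fun z => u' z * v z * w z + u z * v' z * w z + u z * v z * w' z)
      (fun z => u' z * v' z * w z + u' z * v z * w' z + u z * v' z * w' z)
      (fun z => u' z * v' z * w' z) where
  hasDerivAt₀ z hz :=
    ((hu.hasDerivAt z hz).fun_mul (hv.hasDerivAt z hz)).fun_mul (hw.hasDerivAt z hz) |>.congr_deriv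
      (by ring)
  hasDerivAt₁ z hz := by
    have hu₁ := hu.hasDerivAt z hz
    have hv₁ := hv.hasDerivAt z hz
    have hw₁ := hw.hasDerivAt z hz
    have hu₂ := hu.hasDerivAt_deriv z hz
    have hv₂ := hv.hasDerivAt_deriv z hz
    have hw₂ := hw.hasDerivAt_deriv z hz
    exact (((hu₂.fun_mul hv₁).fun_mul hw₁).fun_add ((hu₁.fun_mul hv₂).fun_mul hw₁) |>.fun_add
      ((hu₁.fun_mul hv₁).fun_mul hw₂)).congr_deriv (by ring)
  hasDerivAt₂ z hz := by
    have hu₁ := hu.hasDerivAt z hz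
    have hv₁ := hv.hasDerivAt z hz
    have hw₁ := hw.hasDerivAt z hz
    have hu₂ := hu.hasDerivAt_deriv z hz
    have hv₂ := hv.hasDerivAt_deriv z hz
    have hw₂ := hw.hasDerivAt_deriv z hz
    exact (((hu₂.fun_mul hv₂).fun_mul hw₁).fun_add ((hu₂.fun_mul hv₁).fun_mul hw₂) |>.fun_add
      ((hu₁.fun_mul hv₂).fun_mul hw₂)).congr_deriv (by ring)
  hasDerivAt₃ z hz :=
    ((hu.hasDerivAt_deriv z hz).fun_mul (hv.hasDerivAt_deriv z hz)).fun_mul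
      (hw.hasDerivAt_deriv z hz) |>.congr_deriv (by ring)

theorem Set.EqOn.iteratedDeriv_succ_of_hasDerivAt {f g g' : 𝕜 → 𝕜} {n : ℕ} (hs : IsOpen s)
    (hg : EqOn (iteratedDeriv n f) g s) (hg' : ∀ z ∈ s, HasDerivAt g (g' z) z) :
    EqOn (iteratedDeriv (n + 1) f) g' s := fun z hz => by
  rw [iteratedDeriv_succ, hg.deriv hs hz, (hg' z hz).deriv]

theorem Set.EqOn.eqOn_zero_of_hasDerivAt {f f' : 𝕜 → 𝕜} (hs : IsOpen s) (hf : EqOn f 0 s)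
    (hf' : ∀ z ∈ s, HasDerivAt f (f' z) z) : EqOn f' 0 s := fun z hz => by
  rw [← (hf' z hz).deriv, hf.deriv hs hz, deriv_zero, Pi.zero_apply]

namespace IsSymCubeSolutionOn

variable {y₀ y₁ y₂ y₃ : 𝕜 → 𝕜}

theorem add {x₀ x₁ x₂ x₃ : 𝕜 → 𝕜} (hy : IsSymCubeSolutionOn a s y₀ y₁ y₂ y₃)
    (hx : IsSymCubeSolutionOn a s x₀ x₁ x₂ x₃) :
    IsSymCubeSolutionOn a s (fun z => y₀ z + x₀ z) (fun z => y₁ z + x₁ z)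
      (fun z => y₂ z + x₂ z) (fun z => y₃ z + x₃ z) where
  hasDerivAt₀ z hz := (hy.hasDerivAt₀ z hz).fun_add (hx.hasDerivAt₀ z hz)
  hasDerivAt₁ z hz := (hy.hasDerivAt₁ z hz).fun_add (hx.hasDerivAt₁ z hz) |>.congr_deriv (by ring)
  hasDerivAt₂ z hz := (hy.hasDerivAt₂ z hz).fun_add (hx.hasDerivAt₂ z hz) |>.congr_deriv (by ring)
  hasDerivAt₃ z hz := (hy.hasDerivAt₃ z hz).fun_add (hx.hasDerivAt₃ z hz) |>.congr_deriv (by ring)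

theorem const_mul (hy : IsSymCubeSolutionOn a s y₀ y₁ y₂ y₃) (c : 𝕜) :
    IsSymCubeSolutionOn a s (fun z => c * y₀ z) (fun z => c * y₁ z)
      (fun z => c * y₂ z) (fun z => c * y₃ z) where
  hasDerivAt₀ z hz := (hy.hasDerivAt₀ z hz).const_mul c
  hasDerivAt₁ z hz := (hy.hasDerivAt₁ z hz).const_mul c |>.congr_deriv (by ring)
  hasDerivAt₂ z hz := (hy.hasDerivAt₂ z hz).const_mul c |>.congr_deriv (by ring)
  hasDerivAt₃ z hz := (hy.hasDerivAt₃ z hz).const_mul c |>.congr_deriv (by ring)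

theorem fourth_order (hy : IsSymCubeSolutionOn a s y₀ y₁ y₂ y₃) (hs : IsOpen s)
    (ha : DifferentiableOn 𝕜 a s) (ha' : DifferentiableOn 𝕜 (deriv a) s) :
    ∀ z ∈ s, iteratedDeriv 4 y₀ z + 10 * a z * iteratedDeriv 2 y₀ z + 10 * deriv a z * deriv y₀ z
      + (3 * iteratedDeriv 2 a z + 9 * a z ^ 2) * y₀ z = 0 := by
  have hda : ∀ z ∈ s, HasDerivAt a (deriv a z) z :=
    fun z hz => (ha.differentiableAt (hs.mem_nhds hz)).hasDerivAt
  have hd2a : ∀ z ∈ s, HasDerivAt (deriv a) (iteratedDeriv 2 a z) z := fun z hz => by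
    rw [iteratedDeriv_succ, iteratedDeriv_one]
    exact (ha'.differentiableAt (hs.mem_nhds hz)).hasDerivAt
  have d₁ : EqOn (iteratedDeriv 1 y₀) y₁ s := fun z hz => by
    rw [iteratedDeriv_one, (hy.hasDerivAt₀ z hz).deriv]
  have d₂ : EqOn (iteratedDeriv 2 y₀) (fun z => 2 * y₂ z - 3 * a z * y₀ z) s :=
    d₁.iteratedDeriv_succ_of_hasDerivAt hs hy.hasDerivAt₁
  have d₃ : EqOn (iteratedDeriv 3 y₀)
      (fun z => 6 * y₃ z - 7 * a z * y₁ z - 3 * deriv a z * y₀ z) s :=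
    d₂.iteratedDeriv_succ_of_hasDerivAt hs fun z hz =>
      (((hy.hasDerivAt₂ z hz).const_mul 2).fun_sub
        (((hda z hz).const_mul 3).fun_mul (hy.hasDerivAt₀ z hz))).congr_deriv (by ring)
  have d₄ : EqOn (iteratedDeriv 4 y₀) (fun z => -20 * a z * y₂ z - 10 * deriv a z * y₁ z
      + (21 * a z ^ 2 - 3 * iteratedDeriv 2 a z) * y₀ z) s :=
    d₃.iteratedDeriv_succ_of_hasDerivAt hs fun z hz =>
      ((((hy.hasDerivAt₃ z hz).const_mul 6).fun_sub
        (((hda z hz).const_mul 7).fun_mul (hy.hasDerivAt₁ z hz))).fun_sub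
        (((hd2a z hz).const_mul 3).fun_mul (hy.hasDerivAt₀ z hz))).congr_deriv (by ring)
  intro z hz
  rw [d₄ hz, d₂ hz, (hy.hasDerivAt₀ z hz).deriv]
  ring

theorem eqOn_zero [CharZero 𝕜] (hy : IsSymCubeSolutionOn a s y₀ y₁ y₂ y₃) (hs : IsOpen s)
    (h₀ : EqOn y₀ 0 s) : EqOn y₁ 0 s ∧ EqOn y₂ 0 s ∧ EqOn y₃ 0 s := by
  have h₁ := h₀.eqOn_zero_of_hasDerivAt hs hy.hasDerivAt₀
  have h₂ : EqOn y₂ 0 s := fun z hz => by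
    have h := h₁.eqOn_zero_of_hasDerivAt hs hy.hasDerivAt₁ hz
    simpa only [h₀ hz, Pi.zero_apply, mul_zero, sub_zero, mul_eq_zero, two_ne_zero,
      false_or] using h
  have h₃ : EqOn y₃ 0 s := fun z hz => by
    have h := h₂.eqOn_zero_of_hasDerivAt hs hy.hasDerivAt₂ hz
    simpa only [h₁ hz, Pi.zero_apply, mul_zero, sub_zero, mul_eq_zero, three_ne_zero,
      false_or] using h
  exact ⟨h₁, h₂, h₃⟩

end IsSymCubeSolutionOn

end System

-- The multipliers are polarized products of three rows of the adjugate `!![V, -v; -U, u]`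
-- of `!![u, v; U, V]`.
theorem eq_zero_of_cubic_polarizations_eq_zero {R : Type*} [CommRing R] [NoZeroDivisors R]
    {u v U V c₀ c₁ c₂ c₃ : R} (hW : u * V - v * U ≠ 0)
    (h₀ : c₀ * u ^ 3 + c₁ * u ^ 2 * v + c₂ * u * v ^ 2 + c₃ * v ^ 3 = 0)
    (h₁ : c₀ * (3 * u ^ 2 * U) + c₁ * (2 * u * v * U + u ^ 2 * V)
      + c₂ * (v ^ 2 * U + 2 * u * v * V) + c₃ * (3 * v ^ 2 * V) = 0)
    (h₂ : c₀ * (3 * u * U ^ 2) + c₁ * (v * U ^ 2 + 2 * u * U * V)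
      + c₂ * (u * V ^ 2 + 2 * v * U * V) + c₃ * (3 * v * V ^ 2) = 0)
    (h₃ : c₀ * U ^ 3 + c₁ * U ^ 2 * V + c₂ * U * V ^ 2 + c₃ * V ^ 3 = 0) :
    c₀ = 0 ∧ c₁ = 0 ∧ c₂ = 0 ∧ c₃ = 0 := by
  have hW₃ : (u * V - v * U) ^ 3 ≠ 0 := pow_ne_zero 3 hW
  refine ⟨(mul_eq_zero.mp ?_).resolve_right hW₃, (mul_eq_zero.mp ?_).resolve_right hW₃,
    (mul_eq_zero.mp ?_).resolve_right hW₃, (mul_eq_zero.mp ?_).resolve_right hW₃⟩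
  · linear_combination V ^ 3 * h₀ - v * V ^ 2 * h₁ + v ^ 2 * V * h₂ - v ^ 3 * h₃
  · linear_combination (-3 * U * V ^ 2) * h₀ + (2 * v * U * V + u * V ^ 2) * h₁
      + (-(v ^ 2 * U) - 2 * u * v * V) * h₂ + 3 * u * v ^ 2 * h₃
  · linear_combination (3 * U ^ 2 * V) * h₀ + (-(v * U ^ 2) - 2 * u * U * V) * h₁
      + (2 * u * v * U + u ^ 2 * V) * h₂ - 3 * u ^ 2 * v * h₃
  · linear_combination (-(U ^ 3)) * h₀ + u * U ^ 2 * h₁ - u ^ 2 * U * h₂ + u ^ 3 * h₃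

section Wronskian

variable {𝕜 : Type*} [RCLike 𝕜]

theorem eventuallyEq_const_mul_of_wronskian_eq_zero {f g : 𝕜 → 𝕜} {z₀ : 𝕜}
    (hf : ∀ᶠ z in 𝓝 z₀, DifferentiableAt 𝕜 f z) (hg : ∀ᶠ z in 𝓝 z₀, DifferentiableAt 𝕜 g z)
    (hW : ∀ᶠ z in 𝓝 z₀, g z * deriv f z - f z * deriv g z = 0) (hg₀ : g z₀ ≠ 0) :
    f =ᶠ[𝓝 z₀] fun z => f z₀ / g z₀ * g z := by
  have hg_ne : ∀ᶠ z in 𝓝 z₀, g z ≠ 0 := hg.self_of_nhds.continuousAt.eventually_ne hg₀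
  obtain ⟨ε, hε, hball⟩ := eventually_nhds_iff_ball.mp (hf.and (hg.and (hW.and hg_ne)))
  have hquot : ∀ z ∈ ball z₀ ε, HasDerivAt (fun z => f z / g z) 0 z := fun z hz => by
    obtain ⟨hfz, hgz, hWz, hgz₀⟩ := hball z hz
    refine (hfz.hasDerivAt.fun_div hgz.hasDerivAt hgz₀).congr_deriv ?_
    rw [mul_comm, hWz, zero_div]
  filter_upwards [ball_mem_nhds z₀ hε] with z hz
  have hconst := isOpen_ball.is_const_of_deriv_eq_zero (convex_ball z₀ ε).isPreconnected
    (fun w hw => (hquot w hw).differentiableAt.differentiableWithinAt)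
    (fun w hw => (hquot w hw).deriv) hz (mem_ball_self hε)
  rwa [div_eq_iff (hball z hz).2.2.2] at hconst

theorem exists_wronskian_ne_zero {s : Set 𝕜} (hs : IsOpen s) (hs' : IsPreconnected s)
    {f g : 𝕜 → 𝕜} (hf : AnalyticOnNhd 𝕜 f s) (hg : AnalyticOnNhd 𝕜 g s)
    (hli : ∀ c₁ c₂ : 𝕜, (∀ z ∈ s, c₁ * f z + c₂ * g z = 0) → c₁ = 0 ∧ c₂ = 0) :
    ∃ z ∈ s, f z * deriv g z - g z * deriv f z ≠ 0 := by
  by_contra! hW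
  obtain ⟨z₀, hz₀, hf₀⟩ : ∃ z ∈ s, f z ≠ 0 := by
    by_contra! hf0
    exact one_ne_zero (hli 1 0 fun z hz => by simp [hf0 z hz]).1
  have hnhds : s ∈ 𝓝 z₀ := hs.mem_nhds hz₀
  have hloc := eventuallyEq_const_mul_of_wronskian_eq_zero
    (eventually_of_mem hnhds fun z hz => (hg z hz).differentiableAt)
    (eventually_of_mem hnhds fun z hz => (hf z hz).differentiableAt)
    (eventually_of_mem hnhds hW) hf₀
  have hprop := hg.eqOn_of_preconnected_of_eventuallyEq (analyticOnNhd_const.mul hf) hs' hz₀ hloc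
  exact one_ne_zero (hli (-(g z₀ / f z₀)) 1 fun z hz => by rw [hprop hz]; ring).2

end Wronskian

theorem AnalyticOnNhd.isSolutionOn {𝕜 : Type*} [NontriviallyNormedField 𝕜] [CompleteSpace 𝕜]
    {a f : 𝕜 → 𝕜} {s : Set 𝕜} (hf : AnalyticOnNhd 𝕜 f s)
    (hode : ∀ z ∈ s, deriv (deriv f) z + a z * f z = 0) : IsSolutionOn a s f (deriv f) where
  hasDerivAt z hz := (hf z hz).differentiableAt.hasDerivAt
  hasDerivAt_deriv z hz := by
    rw [← eq_neg_of_add_eq_zero_left (hode z hz)]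
    exact (hf.deriv z hz).differentiableAt.hasDerivAt

theorem cubes_solve_fourth_order (Ω : Set ℂ) (hΩ : IsOpen Ω) (hconn : IsConnected Ω)
    (a f₁ f₂ : ℂ → ℂ) (ha : AnalyticOn ℂ a Ω)
    (hf₁ : AnalyticOn ℂ f₁ Ω) (hf₂ : AnalyticOn ℂ f₂ Ω)
    (hode₁ : ∀ z ∈ Ω, deriv (deriv f₁) z + a z * f₁ z = 0)
    (hode₂ : ∀ z ∈ Ω, deriv (deriv f₂) z + a z * f₂ z = 0)
    (hli : ∀ c₁ c₂ : ℂ, (∀ z ∈ Ω, c₁ * f₁ z + c₂ * f₂ z = 0) → c₁ = 0 ∧ c₂ = 0) :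
    (∀ g ∈ ({fun z => f₁ z ^ 3, fun z => f₁ z ^ 2 * f₂ z,
        fun z => f₁ z * f₂ z ^ 2, fun z => f₂ z ^ 3} : Set (ℂ → ℂ)),
      ∀ z ∈ Ω, iteratedDeriv 4 g z + 10 * a z * iteratedDeriv 2 g z
        + 10 * deriv a z * deriv g z
        + (3 * iteratedDeriv 2 a z + 9 * a z ^ 2) * g z = 0) ∧
    (∀ c₀ c₁ c₂ c₃ : ℂ,
      (∀ z ∈ Ω, c₀ * f₁ z ^ 3 + c₁ * (f₁ z ^ 2 * f₂ z) + c₂ * (f₁ z * f₂ z ^ 2)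
          + c₃ * f₂ z ^ 3 = 0) →
        c₀ = 0 ∧ c₁ = 0 ∧ c₂ = 0 ∧ c₃ = 0) := by
  rw [hΩ.analyticOn_iff_analyticOnNhd] at ha hf₁ hf₂
  have h₁ := hf₁.isSolutionOn hode₁
  have h₂ := hf₂.isSolutionOn hode₂
  constructor
  · intro g hg z hz
    have cube {u u' v v' w w' : ℂ → ℂ} (hu : IsSolutionOn a Ω u u') (hv : IsSolutionOn a Ω v v')
        (hw : IsSolutionOn a Ω w w') :=
      (hu.isSymCubeSolutionOn hv hw).fourth_order hΩ ha.differentiableOn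
        ha.deriv.differentiableOn z hz
    rcases hg with rfl | rfl | rfl | rfl
    · simpa only [pow_three', sq, ← mul_assoc] using cube h₁ h₁ h₁
    · simpa only [pow_three', sq, ← mul_assoc] using cube h₁ h₁ h₂
    · simpa only [pow_three', sq, ← mul_assoc] using cube h₁ h₂ h₂
    · simpa only [pow_three', sq, ← mul_assoc] using cube h₂ h₂ h₂
  · intro c₀ c₁ c₂ c₃ hrel
    obtain ⟨z₀, hz₀, hW⟩ := exists_wronskian_ne_zero hΩ hconn.isPreconnected hf₁ hf₂ hli
    have hY := ((((h₁.isSymCubeSolutionOn h₁ h₁).const_mul c₀).add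
      ((h₁.isSymCubeSolutionOn h₁ h₂).const_mul c₁)).add
      ((h₁.isSymCubeSolutionOn h₂ h₂).const_mul c₂)).add
      ((h₂.isSymCubeSolutionOn h₂ h₂).const_mul c₃)
    obtain ⟨e₁, e₂, e₃⟩ := hY.eqOn_zero hΩ fun z hz => by
      simp only [Pi.zero_apply]; linear_combination hrel z hz
    simp only [EqOn, Pi.zero_apply] at e₁ e₂ e₃
    exact eq_zero_of_cubic_polarizations_eq_zero hW (by linear_combination hrel z₀ hz₀)
      (by linear_combination e₁ hz₀) (by linear_combination e₂ hz₀)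
      (by linear_combination e₃ hz₀)
end

section
/- Let f₁, f₂ be linearly independent analytic solutions of f'' + a f = 0 on a simply connected domain Ω, with a analytic. For k ≥ 2, the functions f₁^{k-1}, f₁^{k-2}f₂, …, f₂^{k-1} are linearly independent solutions of a linear ODE of order k of the form f^{(k)} + a_{k-2} f^{(k-2)} + ⋯ + a₁ f' + a₀ f = 0 with analytic coefficients, and the coefficient of f^{(k-2)} is a_{k-2} = ((k-1)k(k+1)/6)·a. -/
/-!
Fix `p + q = n` and `g = f₁ ^ p * f₂ ^ q`. Expand
`P_z(X) = (f₁ z + f₁' z X) ^ p * (f₂ z + f₂' z X) ^ q` and put `S_m = m! [X^m] P_z`; then `S_0 = g`,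
and `S_{n+1} = 0` because `deg P_z ≤ n`. Since `f_j'' = -a f_j`, differentiating the coefficients of
`P_z` in `z` gives `∂_z P = (1 + a X²) ∂_X P - n a X P`, that is
`S_{m+1}' = S_{m+2} - (m+1)(n-m) a S_m`. Hence `S_m = L_m g` for the differential operators
`L_0 = 1`, `L_1 = D`, `L_{m+2} = D L_{m+1} + (m+1)(n-m) a L_m`, which depend on `n` and `a` only, so
`L_{n+1}` annihilates every `f₁^{n-j} f₂^j`. Its top coefficient is `1`, the next one vanishes, and
the one after is `a ∑_{j<n} (j+1)(n-j) = n(n+1)(n+2)/6 · a`.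

Near a point where `f₁ ≠ 0`, a relation `∑ c_j f₁^{n-j} f₂^j = 0` says that `∑ c_j X^j` vanishes
along `f₂ / f₁`. By the open mapping theorem `f₂ / f₁` is either locally constant, which the
identity theorem and the independence of `f₁, f₂` exclude, or covers a neighbourhood, which forces
the polynomial to vanish.
-/

open Polynomial Finset Filter Topology
open scoped Nat

section CoeffwiseDeriv

variable {𝕜 : Type*} [NontriviallyNormedField 𝕜]

def HasCoeffwiseDerivAt (A : 𝕜 → 𝕜[X]) (A' : 𝕜[X]) (z : 𝕜) : Prop :=
  ∀ i, HasDerivAt (fun w => (A w).coeff i) (A'.coeff i) z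

namespace HasCoeffwiseDerivAt

variable {A B : 𝕜 → 𝕜[X]} {A' B' : 𝕜[X]} {z : 𝕜}

theorem const (P : 𝕜[X]) (z : 𝕜) : HasCoeffwiseDerivAt (fun _ => P) 0 z :=
  fun i => by simpa using hasDerivAt_const z (P.coeff i)

theorem mul (hA : HasCoeffwiseDerivAt A A' z) (hB : HasCoeffwiseDerivAt B B' z) :
    HasCoeffwiseDerivAt (fun w => A w * B w) (A' * B z + A z * B') z := by
  intro i
  simp only [coeff_add, coeff_mul, ← sum_add_distrib]
  exact HasDerivAt.fun_sum fun x _ => (hA x.1).mul (hB x.2)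

theorem pow (hA : HasCoeffwiseDerivAt A A' z) (n : ℕ) :
    HasCoeffwiseDerivAt (fun w => A w ^ n) (C (n : 𝕜) * A z ^ (n - 1) * A') z := by
  induction n with
  | zero => simpa using const 1 z
  | succ n ih =>
    simp only [pow_succ]
    convert ih.mul hA using 1
    rcases n with _ | n
    · simp
    · simp only [Nat.cast_add, Nat.cast_one, map_add, map_one, add_tsub_cancel_right, pow_succ]
      ring

end HasCoeffwiseDerivAt

theorem hasCoeffwiseDerivAt_C_mul_X_add_C {u v : 𝕜 → 𝕜} {u' v' z : 𝕜}
    (hu : HasDerivAt u u' z) (hv : HasDerivAt v v' z) :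
    HasCoeffwiseDerivAt (fun w => C (u w) * X + C (v w)) (C u' * X + C v') z := by
  intro i
  simp only [coeff_add, coeff_C_mul_X, coeff_C]
  rcases i with _ | _ | i
  · simpa using hv
  · simpa using hu
  · simpa using hasDerivAt_const z (0 : 𝕜)

end CoeffwiseDeriv

theorem natCast_mul_pow_sub_one_mul {R : Type*} [CommSemiring R] (n : ℕ) (x : R) :
    (n : R) * x ^ (n - 1) * x = n * x ^ n := by
  rcases n with _ | n <;> simp [pow_succ, mul_assoc]

section FreeDeriv

variable {𝕜 : Type*} [NontriviallyNormedField 𝕜] (f₁ f₂ : 𝕜 → 𝕜) (p q : ℕ)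

noncomputable def freePoly (z : 𝕜) : 𝕜[X] :=
  (C (deriv f₁ z) * X + C (f₁ z)) ^ p * (C (deriv f₂ z) * X + C (f₂ z)) ^ q

/-- What the Leibniz rule gives for `(f₁ ^ p * f₂ ^ q)^{(m)}` when `f₁'' = f₂'' = 0`. -/
noncomputable def freeDeriv (m : ℕ) (z : 𝕜) : 𝕜 :=
  (m ! : 𝕜) * (freePoly f₁ f₂ p q z).coeff m

theorem freeDeriv_zero : freeDeriv f₁ f₂ p q 0 = fun z => f₁ z ^ p * f₂ z ^ q := by
  ext z
  simp [freeDeriv, freePoly, coeff_zero_eq_eval_zero]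

theorem freeDeriv_eq_zero_of_lt {m : ℕ} (hm : p + q < m) : freeDeriv f₁ f₂ p q m = 0 := by
  ext z
  suffices (freePoly f₁ f₂ p q z).natDegree ≤ p + q by
    simp [freeDeriv, coeff_eq_zero_of_natDegree_lt (this.trans_lt hm)]
  refine natDegree_mul_le.trans (add_le_add ?_ ?_) <;>
    exact (natDegree_pow_le_of_le _ natDegree_linear_le).trans (by simp)

variable {f₁ f₂} {a z : 𝕜}

theorem hasCoeffwiseDerivAt_freePoly
    (h₁ : DifferentiableAt 𝕜 f₁ z) (h₁' : DifferentiableAt 𝕜 (deriv f₁) z)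
    (h₂ : DifferentiableAt 𝕜 f₂ z) (h₂' : DifferentiableAt 𝕜 (deriv f₂) z)
    (hode₁ : deriv (deriv f₁) z = -(a * f₁ z)) (hode₂ : deriv (deriv f₂) z = -(a * f₂ z)) :
    HasCoeffwiseDerivAt (freePoly f₁ f₂ p q)
      (derivative (freePoly f₁ f₂ p q z) + C a * (X ^ 2 * derivative (freePoly f₁ f₂ p q z)
        - C ((p + q : ℕ) : 𝕜) * (X * freePoly f₁ f₂ p q z))) z := by
  have hA := hasCoeffwiseDerivAt_C_mul_X_add_C h₁'.hasDerivAt h₁.hasDerivAt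
  have hB := hasCoeffwiseDerivAt_C_mul_X_add_C h₂'.hasDerivAt h₂.hasDerivAt
  convert (hA.pow p).mul (hB.pow q) using 1
  · rfl
  have hp := natCast_mul_pow_sub_one_mul p (C (deriv f₁ z) * X + C (f₁ z))
  have hq := natCast_mul_pow_sub_one_mul q (C (deriv f₂ z) * X + C (f₂ z))
  simp only [freePoly, hode₁, hode₂, derivative_mul, derivative_pow,
    derivative_X, derivative_C, map_natCast, map_neg, map_mul, map_add, Nat.cast_add]
  linear_combination (C a * X * (C (deriv f₂ z) * X + C (f₂ z)) ^ q) * hp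
    + (C a * X * (C (deriv f₁ z) * X + C (f₁ z)) ^ p) * hq

theorem hasDerivAt_freeDeriv_zero
    (h₁ : DifferentiableAt 𝕜 f₁ z) (h₁' : DifferentiableAt 𝕜 (deriv f₁) z)
    (h₂ : DifferentiableAt 𝕜 f₂ z) (h₂' : DifferentiableAt 𝕜 (deriv f₂) z)
    (hode₁ : deriv (deriv f₁) z = -(a * f₁ z)) (hode₂ : deriv (deriv f₂) z = -(a * f₂ z)) :
    HasDerivAt (freeDeriv f₁ f₂ p q 0) (freeDeriv f₁ f₂ p q 1 z) z := by
  convert hasCoeffwiseDerivAt_freePoly p q h₁ h₁' h₂ h₂' hode₁ hode₂ 0 using 1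
  · ext w
    simp [freeDeriv]
  · simp [freeDeriv, coeff_derivative]

theorem hasDerivAt_freeDeriv_succ
    (h₁ : DifferentiableAt 𝕜 f₁ z) (h₁' : DifferentiableAt 𝕜 (deriv f₁) z)
    (h₂ : DifferentiableAt 𝕜 f₂ z) (h₂' : DifferentiableAt 𝕜 (deriv f₂) z)
    (hode₁ : deriv (deriv f₁) z = -(a * f₁ z)) (hode₂ : deriv (deriv f₂) z = -(a * f₂ z))
    (m : ℕ) :
    HasDerivAt (freeDeriv f₁ f₂ p q (m + 1))
      (freeDeriv f₁ f₂ p q (m + 2) z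
        - (m + 1) * ((p + q : ℕ) - m) * a * freeDeriv f₁ f₂ p q m z) z := by
  have h : HasDerivAt (freeDeriv f₁ f₂ p q (m + 1)) _ z :=
    (hasCoeffwiseDerivAt_freePoly p q h₁ h₁' h₂ h₂' hode₁ hode₂ (m + 1)).const_mul ((m + 1)! : 𝕜)
  refine h.congr_deriv ?_
  have hX : (X ^ 2 * derivative (freePoly f₁ f₂ p q z)).coeff (m + 1)
      = (freePoly f₁ f₂ p q z).coeff m * m := by
    rcases m with _ | m
    · simp [coeff_X_pow_mul']
    · simp [coeff_X_pow_mul', coeff_derivative]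
  simp only [freeDeriv, coeff_add, coeff_C_mul, coeff_sub, coeff_X_mul, coeff_derivative, hX,
    Nat.factorial_succ, Nat.cast_mul]
  push_cast
  ring

end FreeDeriv

section DiffOp

variable {𝕜 : Type*} [NontriviallyNormedField 𝕜] (c : ℕ → 𝕜 → 𝕜)

/-- `opCoeff c m i` is the coefficient of `D^i` in the operator `L_m` defined by `L_0 = 1`,
`L_1 = D` and `L_{m+2} = D ∘ L_{m+1} + c m • L_m`, where `D` is differentiation. -/
noncomputable def opCoeff : ℕ → ℕ → 𝕜 → 𝕜
  | 0, 0 => 1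
  | 0, _ + 1 => 0
  | 1, 0 => 0
  | 1, 1 => 1
  | 1, _ + 2 => 0
  | m + 2, 0 => fun z => deriv (opCoeff (m + 1) 0) z + c m z * opCoeff m 0 z
  | m + 2, i + 1 => fun z =>
      deriv (opCoeff (m + 1) (i + 1)) z + opCoeff (m + 1) i z + c m z * opCoeff m (i + 1) z

theorem opCoeff_add_two_zero (m : ℕ) :
    opCoeff c (m + 2) 0 = fun z => deriv (opCoeff c (m + 1) 0) z + c m z * opCoeff c m 0 z :=
  rfl

theorem opCoeff_add_two_succ (m i : ℕ) :
    opCoeff c (m + 2) (i + 1) = fun z =>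
      deriv (opCoeff c (m + 1) (i + 1)) z + opCoeff c (m + 1) i z + c m z * opCoeff c m (i + 1) z :=
  rfl

theorem opCoeff_eq_zero_of_lt : ∀ {m i : ℕ}, m < i → opCoeff c m i = 0
  | 0, _ + 1, _ => rfl
  | 1, _ + 2, _ => rfl
  | m + 2, i + 1, h => by
    ext z
    simp [opCoeff, opCoeff_eq_zero_of_lt (show m + 1 < i + 1 by omega),
      opCoeff_eq_zero_of_lt (show m + 1 < i by omega),
      opCoeff_eq_zero_of_lt (show m < i + 1 by omega)]

theorem opCoeff_self : ∀ m : ℕ, opCoeff c m m = 1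
  | 0 => rfl
  | 1 => rfl
  | m + 2 => by
    ext z
    simp [opCoeff, opCoeff_self (m + 1), opCoeff_eq_zero_of_lt c (show m + 1 < m + 2 by omega),
      opCoeff_eq_zero_of_lt c (show m < m + 2 by omega)]

theorem opCoeff_succ_self : ∀ m : ℕ, opCoeff c (m + 1) m = 0
  | 0 => rfl
  | m + 1 => by
    ext z
    simp [opCoeff, opCoeff_self, opCoeff_succ_self m,
      opCoeff_eq_zero_of_lt c (show m < m + 1 by omega)]

theorem opCoeff_add_two_self :
    ∀ m : ℕ, opCoeff c (m + 2) m = fun z => ∑ j ∈ range (m + 1), c j z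
  | 0 => by
    ext z
    simp [opCoeff]
  | m + 1 => by
    ext z
    rw [opCoeff_add_two_succ]
    simp [opCoeff_self, opCoeff_succ_self, opCoeff_add_two_self m, sum_range_succ _ (m + 1)]

theorem analyticOnNhd_opCoeff [CompleteSpace 𝕜] {s : Set 𝕜}
    (hc : ∀ m, AnalyticOnNhd 𝕜 (c m) s) :
    ∀ m i, AnalyticOnNhd 𝕜 (opCoeff c m i) s
  | 0, 0 | 0, _ + 1 | 1, 0 | 1, 1 | 1, _ + 2 => analyticOnNhd_const
  | m + 2, 0 => ((analyticOnNhd_opCoeff hc (m + 1) 0).deriv).add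
      ((hc m).mul (analyticOnNhd_opCoeff hc m 0))
  | m + 2, i + 1 => (((analyticOnNhd_opCoeff hc (m + 1) (i + 1)).deriv).add
      (analyticOnNhd_opCoeff hc (m + 1) i)).add ((hc m).mul (analyticOnNhd_opCoeff hc m (i + 1)))

theorem deriv_sum_mul_iteratedDeriv {β : ℕ → 𝕜 → 𝕜} {g : 𝕜 → 𝕜} {z : 𝕜}
    (hβ : ∀ i, DifferentiableAt 𝕜 (β i) z) (hg : ∀ i, DifferentiableAt 𝕜 (iteratedDeriv i g) z)
    (N : ℕ) :
    deriv (fun w => ∑ i ∈ range N, β i w * iteratedDeriv i g w) z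
      = ∑ i ∈ range N,
          (deriv (β i) z * iteratedDeriv i g z + β i z * iteratedDeriv (i + 1) g z) := by
  rw [deriv_fun_sum (A := fun i w => β i w * iteratedDeriv i g w) fun i _ => (hβ i).mul (hg i)]
  refine sum_congr rfl fun i _ => ?_
  rw [deriv_fun_mul (hβ i) (hg i), iteratedDeriv_succ]

variable [CompleteSpace 𝕜] {s : Set 𝕜} {g : 𝕜 → 𝕜} {S : ℕ → 𝕜 → 𝕜}

theorem eqOn_sum_opCoeff_mul_iteratedDeriv (hs : IsOpen s) (hc : ∀ m, AnalyticOnNhd 𝕜 (c m) s)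
    (hg : AnalyticOnNhd 𝕜 g s) (h₀ : Set.EqOn (S 0) g s)
    (h₁ : ∀ z ∈ s, HasDerivAt (S 0) (S 1 z) z)
    (hS : ∀ m, ∀ z ∈ s, HasDerivAt (S (m + 1)) (S (m + 2) z - c m z * S m z) z) :
    ∀ m, Set.EqOn (S m) (fun z => ∑ i ∈ range (m + 1), opCoeff c m i z * iteratedDeriv i g z) s
  | 0 => fun z hz => by simp [h₀ hz, opCoeff]
  | 1 => fun z hz => by
    have hd : deriv (S 0) z = deriv g z := (h₀.eventuallyEq_of_mem (hs.mem_nhds hz)).deriv_eq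
    simp [← (h₁ z hz).deriv, hd, sum_range_succ, opCoeff]
  | m + 2 => fun z hz => by
    have hd : deriv (S (m + 1)) z = ∑ i ∈ range (m + 2),
        (deriv (opCoeff c (m + 1) i) z * iteratedDeriv i g z
          + opCoeff c (m + 1) i z * iteratedDeriv (i + 1) g z) := by
      rw [((eqOn_sum_opCoeff_mul_iteratedDeriv hs hc hg h₀ h₁ hS (m + 1)).eventuallyEq_of_mem
        (hs.mem_nhds hz)).deriv_eq]
      refine deriv_sum_mul_iteratedDeriv
        (fun i => (analyticOnNhd_opCoeff c hc (m + 1) i z hz).differentiableAt) (fun i => ?_) _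
      rw [iteratedDeriv_eq_iterate]
      exact (hg.iterated_deriv i z hz).differentiableAt
    have hderiv : ∑ i ∈ range (m + 2), deriv (opCoeff c (m + 1) i) z * iteratedDeriv i g z
        = ∑ i ∈ range (m + 2), deriv (opCoeff c (m + 1) (i + 1)) z * iteratedDeriv (i + 1) g z
          + deriv (opCoeff c (m + 1) 0) z * iteratedDeriv 0 g z := by
      rw [sum_range_succ', sum_range_succ _ (m + 1),
        opCoeff_eq_zero_of_lt c (by omega : m + 1 < m + 2)]
      simp
    have hprev : ∑ i ∈ range (m + 1), opCoeff c m i z * iteratedDeriv i g z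
        = ∑ i ∈ range (m + 2), opCoeff c m (i + 1) z * iteratedDeriv (i + 1) g z
          + opCoeff c m 0 z * iteratedDeriv 0 g z := by
      rw [sum_range_succ', sum_range_succ _ (m + 1), sum_range_succ _ m,
        opCoeff_eq_zero_of_lt c (by omega : m < m + 1),
        opCoeff_eq_zero_of_lt c (by omega : m < m + 2)]
      simp
    have hrec := (hS m z hz).deriv
    rw [eq_sub_iff_add_eq] at hrec
    rw [← hrec, hd, eqOn_sum_opCoeff_mul_iteratedDeriv hs hc hg h₀ h₁ hS m hz]
    beta_reduce
    rw [sum_add_distrib, hderiv, hprev, sum_range_succ' _ (m + 2)]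
    simp only [opCoeff_add_two_succ, opCoeff_add_two_zero, add_mul, sum_add_distrib, mul_add,
      mul_sum, mul_assoc]
    ring

end DiffOp

theorem sum_opCoeff_mul_iteratedDeriv_pow_mul_pow_eq_zero {𝕜 : Type*} [NontriviallyNormedField 𝕜]
    [CompleteSpace 𝕜] {s : Set 𝕜} {a f₁ f₂ : 𝕜 → 𝕜} (hs : IsOpen s) (ha : AnalyticOnNhd 𝕜 a s)
    (hf₁ : AnalyticOnNhd 𝕜 f₁ s) (hf₂ : AnalyticOnNhd 𝕜 f₂ s)
    (hode₁ : ∀ z ∈ s, deriv (deriv f₁) z = -(a z * f₁ z))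
    (hode₂ : ∀ z ∈ s, deriv (deriv f₂) z = -(a z * f₂ z))
    {p q n : ℕ} (hpq : p + q = n) {z : 𝕜} (hz : z ∈ s) :
    ∑ i ∈ range (n + 2), opCoeff (fun m z => ((m : 𝕜) + 1) * ((n : 𝕜) - m) * a z) (n + 1) i z
      * iteratedDeriv i (fun w => f₁ w ^ p * f₂ w ^ q) z = 0 := by
  subst hpq
  have hd {f : 𝕜 → 𝕜} (hf : AnalyticOnNhd 𝕜 f s) {w : 𝕜} (hw : w ∈ s) :
      DifferentiableAt 𝕜 f w :=
    (hf w hw).differentiableAt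
  have h := eqOn_sum_opCoeff_mul_iteratedDeriv _ hs (fun m => analyticOnNhd_const.mul ha)
    ((hf₁.pow p).mul (hf₂.pow q)) (S := freeDeriv f₁ f₂ p q)
    (by rw [freeDeriv_zero]; exact Set.eqOn_refl _ _)
    (fun w hw => hasDerivAt_freeDeriv_zero p q (hd hf₁ hw) (hd hf₁.deriv hw) (hd hf₂ hw)
      (hd hf₂.deriv hw) (hode₁ w hw) (hode₂ w hw))
    (fun m w hw => hasDerivAt_freeDeriv_succ p q (hd hf₁ hw) (hd hf₁.deriv hw) (hd hf₂ hw)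
      (hd hf₂.deriv hw) (hode₁ w hw) (hode₂ w hw) m) (p + q + 1) hz
  rw [freeDeriv_eq_zero_of_lt f₁ f₂ p q (lt_add_one _)] at h
  exact h.symm

section Independence

variable {K : Type*} [Field K] [DecidableEq K]

theorem pow_mul_eval_ofFn_div {k : ℕ} (c : Fin k → K) {x : K} (y : K) (hx : x ≠ 0) :
    x ^ (k - 1) * (ofFn k c).eval (y / x)
      = ∑ j : Fin k, c j * (x ^ (k - 1 - j) * y ^ (j : ℕ)) := by
  rw [ofFn_eq_sum_monomial, eval_finsetSum, mul_sum]
  refine sum_congr rfl fun j _ => ?_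
  rw [eval_monomial, div_pow, ← pow_sub_mul_pow x (Nat.le_sub_one_of_lt j.isLt)]
  field_simp

variable {Ω : Set ℂ} {f₁ f₂ : ℂ → ℂ}

theorem eq_zero_of_eventually_eval_div_eq_zero (hΩ : IsPreconnected Ω)
    (hf₁ : AnalyticOnNhd ℂ f₁ Ω) (hf₂ : AnalyticOnNhd ℂ f₂ Ω)
    (hindep : ∀ r : ℂ, ¬ Set.EqOn f₂ (fun z => r * f₁ z) Ω) {z₀ : ℂ} (hz₀ : z₀ ∈ Ω)
    (hf₁z₀ : f₁ z₀ ≠ 0) {P : ℂ[X]} (hP : ∀ᶠ z in 𝓝 z₀, P.eval (f₂ z / f₁ z) = 0) : P = 0 := by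
  rcases ((hf₂ z₀ hz₀).div (hf₁ z₀ hz₀) hf₁z₀).eventually_constant_or_nhds_le_map_nhds
    with hconst | hopen
  · refine absurd (hf₂.eqOn_of_preconnected_of_eventuallyEq (analyticOnNhd_const.mul hf₁) hΩ hz₀
      ?_) (hindep (f₂ z₀ / f₁ z₀))
    filter_upwards [hconst, (hf₁ z₀ hz₀).continuousAt.eventually_ne hf₁z₀] with z hz hne
    rw [← Pi.div_apply, ← hz, Pi.div_apply, div_mul_cancel₀ _ hne]
  · exact eq_zero_of_infinite_isRoot P (infinite_of_mem_nhds _ (hopen hP))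

theorem eq_zero_of_forall_sum_mul_pow_mul_pow_eq_zero (hΩ : IsOpen Ω) (hΩc : IsPreconnected Ω)
    (hf₁ : AnalyticOnNhd ℂ f₁ Ω) (hf₂ : AnalyticOnNhd ℂ f₂ Ω)
    (hli : ∀ c₁ c₂ : ℂ, (∀ z ∈ Ω, c₁ * f₁ z + c₂ * f₂ z = 0) → c₁ = 0 ∧ c₂ = 0)
    {k : ℕ} (c : Fin k → ℂ)
    (H : ∀ z ∈ Ω, ∑ j : Fin k, c j * (f₁ z ^ (k - 1 - j) * f₂ z ^ (j : ℕ)) = 0) : c = 0 := by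
  obtain ⟨z₀, hz₀, hf₁z₀⟩ : ∃ z ∈ Ω, f₁ z ≠ 0 := by
    by_contra! h
    exact one_ne_zero (hli 1 0 fun z hz => by simp [h z hz]).1
  have hindep (r : ℂ) : ¬ Set.EqOn f₂ (fun z => r * f₁ z) Ω := fun h =>
    one_ne_zero (hli (-r) 1 fun z hz => by rw [h hz]; ring).2
  refine injective_ofFn k ((eq_zero_of_eventually_eval_div_eq_zero hΩc hf₁ hf₂ hindep hz₀ hf₁z₀
    ?_).trans (ofFn_zero k).symm)
  filter_upwards [hΩ.mem_nhds hz₀, (hf₁ z₀ hz₀).continuousAt.eventually_ne hf₁z₀] with z hz hne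
  have h := pow_mul_eval_ofFn_div c (f₂ z) hne
  rw [H z hz] at h
  exact (mul_eq_zero.1 h).resolve_left (pow_ne_zero _ hne)

end Independence

theorem six_mul_sum_range_succ_mul_sub {R : Type*} [CommRing R] (n N : ℕ) :
    6 * ∑ j ∈ range N, ((j : R) + 1) * (n - j) = N * (N + 1) * (3 * n - 2 * N + 2) := by
  induction N with
  | zero => simp
  | succ N ih =>
    rw [sum_range_succ, mul_add, ih]
    push_cast
    ring

theorem powers_solve_kth_order_general (Ω : Set ℂ) (hΩ : IsOpen Ω) (hconn : IsConnected Ω)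
    (a f₁ f₂ : ℂ → ℂ) (ha : AnalyticOn ℂ a Ω)
    (hf₁ : AnalyticOn ℂ f₁ Ω) (hf₂ : AnalyticOn ℂ f₂ Ω)
    (hode₁ : ∀ z ∈ Ω, deriv (deriv f₁) z + a z * f₁ z = 0)
    (hode₂ : ∀ z ∈ Ω, deriv (deriv f₂) z + a z * f₂ z = 0)
    (hli : ∀ c₁ c₂ : ℂ, (∀ z ∈ Ω, c₁ * f₁ z + c₂ * f₂ z = 0) → c₁ = 0 ∧ c₂ = 0)
    (k : ℕ) (hk : 2 ≤ k) :
    (∃ b : ℕ → (ℂ → ℂ),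
      (∀ j < k - 1, AnalyticOn ℂ (b j) Ω) ∧
      (∀ j : Fin k, ∀ z ∈ Ω,
        iteratedDeriv k (fun w => f₁ w ^ (k - 1 - (j : ℕ)) * f₂ w ^ (j : ℕ)) z +
          ∑ i ∈ Finset.range (k - 1),
            b i z * iteratedDeriv i
              (fun w => f₁ w ^ (k - 1 - (j : ℕ)) * f₂ w ^ (j : ℕ)) z = 0) ∧
      (∀ z ∈ Ω, b (k - 2) z = (((k : ℂ) - 1) * k * ((k : ℂ) + 1) / 6) * a z)) ∧
    (∀ c : Fin k → ℂ,
      (∀ z ∈ Ω, ∑ j : Fin k, c j * (f₁ z ^ (k - 1 - (j : ℕ)) * f₂ z ^ (j : ℕ)) = 0) →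
        ∀ j, c j = 0) := by
  rw [hΩ.analyticOn_iff_analyticOnNhd] at ha hf₁ hf₂
  have hode (f : ℂ → ℂ) (h : ∀ z ∈ Ω, deriv (deriv f) z + a z * f z = 0) (z : ℂ) (hz : z ∈ Ω) :
      deriv (deriv f) z = -(a z * f z) :=
    eq_neg_of_add_eq_zero_left (h z hz)
  obtain ⟨n, rfl⟩ : ∃ n, k = n + 2 := ⟨k - 2, by omega⟩
  set κ : ℕ → ℂ → ℂ := fun m z => ((m : ℂ) + 1) * (((n + 1 : ℕ) : ℂ) - m) * a z
  refine ⟨⟨fun i => opCoeff κ (n + 2) i, fun i _ => (analyticOnNhd_opCoeff κ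
    (fun m => analyticOnNhd_const.mul ha) (n + 2) i).analyticOn, fun j z hz => ?_, fun z _ => ?_⟩,
    fun c H => congrFun (eq_zero_of_forall_sum_mul_pow_mul_pow_eq_zero hΩ hconn.isPreconnected
      hf₁ hf₂ hli c H)⟩
  · have h := sum_opCoeff_mul_iteratedDeriv_pow_mul_pow_eq_zero hΩ ha hf₁ hf₂ (hode f₁ hode₁)
      (hode f₂ hode₂) (p := n + 2 - 1 - j) (q := j) (n := n + 1) (by omega) hz
    rw [sum_range_succ, sum_range_succ, opCoeff_succ_self, opCoeff_self, Pi.zero_apply,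
      Pi.one_apply, zero_mul, add_zero, one_mul, add_comm] at h
    exact h
  · have h6 := six_mul_sum_range_succ_mul_sub (R := ℂ) (n + 1) (n + 1)
    simp only [show n + 2 - 2 = n from rfl, opCoeff_add_two_self, κ, ← sum_mul]
    push_cast at h6 ⊢
    linear_combination (a z / 6) * h6

theorem powers_solve_kth_order (Ω : Set ℂ) (hΩ : IsOpen Ω) (hconn : IsConnected Ω)
    (hsc : SimplyConnectedSpace Ω)
    (a f₁ f₂ : ℂ → ℂ) (ha : AnalyticOn ℂ a Ω)
    (hf₁ : AnalyticOn ℂ f₁ Ω) (hf₂ : AnalyticOn ℂ f₂ Ω)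
    (hode₁ : ∀ z ∈ Ω, deriv (deriv f₁) z + a z * f₁ z = 0)
    (hode₂ : ∀ z ∈ Ω, deriv (deriv f₂) z + a z * f₂ z = 0)
    (hli : ∀ c₁ c₂ : ℂ, (∀ z ∈ Ω, c₁ * f₁ z + c₂ * f₂ z = 0) → c₁ = 0 ∧ c₂ = 0)
    (k : ℕ) (hk : 2 ≤ k) :
    (∃ b : ℕ → (ℂ → ℂ),
      (∀ j < k - 1, AnalyticOn ℂ (b j) Ω) ∧
      (∀ j : Fin k, ∀ z ∈ Ω,
        iteratedDeriv k (fun w => f₁ w ^ (k - 1 - (j : ℕ)) * f₂ w ^ (j : ℕ)) z +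
          ∑ i ∈ Finset.range (k - 1),
            b i z * iteratedDeriv i
              (fun w => f₁ w ^ (k - 1 - (j : ℕ)) * f₂ w ^ (j : ℕ)) z = 0) ∧
      (∀ z ∈ Ω, b (k - 2) z = (((k : ℂ) - 1) * k * ((k : ℂ) + 1) / 6) * a z)) ∧
    (∀ c : Fin k → ℂ,
      (∀ z ∈ Ω, ∑ j : Fin k, c j * (f₁ z ^ (k - 1 - (j : ℕ)) * f₂ z ^ (j : ℕ)) = 0) →
        ∀ j, c j = 0) :=
  powers_solve_kth_order_general Ω hΩ hconn a f₁ f₂ ha hf₁ hf₂ hode₁ hode₂ hli k hk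
end

section
/- For α > 1 and j ∈ {1,2}, the functions f_j(z) = z^{(1−α)/2}·exp((−1)^{j+1} z^α) (principal branches) are zero-free solutions of f'' + a f = 0 on the right half-plane, where a(z) = (1−α²)/(4z²) − α² z^{2α−2}; moreover f₁ and f₂ are linearly independent over ℂ. -/
/-!
For `f = z ^ b * exp (ε * z ^ c)` the logarithmic derivative `L = b / z + ε c z ^ (c - 1)` gives
`f'' = (L' + L ^ 2) f`. When `b = (1 - c) / 2` and `ε ^ 2 = 1`, the `z ^ (c - 2)` terms of `L'` and
`L ^ 2` cancel and `L' + L ^ 2 = c ^ 2 z ^ (2c - 2) - (1 - c ^ 2) / (4 z ^ 2)`, which is `-a` for `c = α`.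
A vanishing combination `c₁ f₁ + c₂ f₂` evaluated at `z = 1` and `z = 2` gives
`c₁ e ^ t + c₂ e ^ (-t) = 0` for `t = 1` and `t = 2 ^ α`, a nonsingular system because `2 ^ α ≠ 1`.
-/

open Complex Filter Topology

theorem deriv_deriv_eq_of_hasDerivAt_eq_mul {𝕜 : Type*} [NontriviallyNormedField 𝕜]
    {f L : 𝕜 → 𝕜} {L' x : 𝕜} (hf : ∀ᶠ y in 𝓝 x, HasDerivAt f (L y * f y) y)
    (hL : HasDerivAt L L' x) :
    deriv (deriv f) x = (L' + L x ^ 2) * f x := by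
  have hderiv : deriv f =ᶠ[𝓝 x] fun y => L y * f y := hf.mono fun y hy => hy.deriv
  rw [hderiv.deriv_eq, (hL.fun_mul hf.self_of_nhds).deriv]
  ring

theorem hasDerivAt_cpow_mul_exp_cpow {b c ε z : ℂ} (hz : z ∈ slitPlane) :
    HasDerivAt (fun w => w ^ b * exp (ε * w ^ c))
      ((b * z⁻¹ + ε * c * z ^ (c - 1)) * (z ^ b * exp (ε * z ^ c))) z := by
  refine ((hasStrictDerivAt_cpow_const hz).hasDerivAt.fun_mul
    ((hasStrictDerivAt_cpow_const hz).hasDerivAt.const_mul ε).cexp).congr_deriv ?_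
  rw [cpow_sub _ _ (slitPlane_ne_zero hz), cpow_one, div_eq_mul_inv]
  ring

theorem deriv_deriv_cpow_mul_exp_cpow {c ε z : ℂ} (hε : ε ^ 2 = 1) (hz : z ∈ slitPlane) :
    deriv (deriv fun w => w ^ ((1 - c) / 2) * exp (ε * w ^ c)) z =
      (c ^ 2 * z ^ (2 * c - 2) - (1 - c ^ 2) / (4 * z ^ 2)) *
        (z ^ ((1 - c) / 2) * exp (ε * z ^ c)) := by
  set b := (1 - c) / 2 with hb
  have hz0 := slitPlane_ne_zero hz
  have hL : HasDerivAt (fun w => b * w⁻¹ + ε * c * w ^ (c - 1))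
      (b * -(z ^ 2)⁻¹ + ε * c * ((c - 1) * z ^ (c - 1 - 1))) z :=
    ((hasDerivAt_inv hz0).const_mul b).add
      ((hasStrictDerivAt_cpow_const hz).hasDerivAt.const_mul (ε * c))
  rw [deriv_deriv_eq_of_hasDerivAt_eq_mul
    (eventually_of_mem (isOpen_slitPlane.mem_nhds hz) fun w hw =>
      hasDerivAt_cpow_mul_exp_cpow hw) hL]
  have h1 : z ^ (c - 1 - 1) = z ^ (c - 1) * z⁻¹ := by
    rw [cpow_sub _ _ hz0, cpow_one, div_eq_mul_inv]
  have h2 : z ^ (2 * c - 2) = z ^ (c - 1) * z ^ (c - 1) := by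
    rw [← cpow_add _ _ hz0]; ring_nf
  congr 1
  rw [h1, h2, hb]
  field_simp
  linear_combination 16 * c ^ 2 * z ^ 2 * (z ^ (c - 1)) ^ 2 * hε

theorem eq_zero_of_mul_exp_add_mul_exp_neg {c₁ c₂ s t : ℂ} (hst : exp (2 * s) ≠ exp (2 * t))
    (hs : c₁ * exp s + c₂ * exp (-s) = 0) (ht : c₁ * exp t + c₂ * exp (-t) = 0) :
    c₁ = 0 ∧ c₂ = 0 := by
  have hdouble : ∀ u, c₁ * exp u + c₂ * exp (-u) = 0 → c₁ * exp (2 * u) + c₂ = 0 := by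
    intro u hu
    have hinv : exp u * exp (-u) = 1 := by rw [← exp_add, add_neg_cancel, exp_zero]
    rw [two_mul, exp_add]
    linear_combination exp u * hu - c₂ * hinv
  have hc₁ : c₁ = 0 := by
    have h : c₁ * (exp (2 * s) - exp (2 * t)) = 0 := by
      linear_combination hdouble s hs - hdouble t ht
    exact (mul_eq_zero.1 h).resolve_right (sub_ne_zero.2 hst)
  refine ⟨hc₁, ?_⟩
  simpa [hc₁] using hdouble s hs

theorem halfplane_zero_free_solutions (α : ℝ) (hα : 1 < α) :
    let H : Set ℂ := {z | 0 < z.re}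
    let a : ℂ → ℂ := fun z => (1 - (α : ℂ) ^ 2) / (4 * z ^ 2) -
      (α : ℂ) ^ 2 * z ^ (((2 * α - 2 : ℝ) : ℂ))
    let f₁ : ℂ → ℂ := fun z => z ^ ((((1 - α) / 2 : ℝ) : ℂ)) * Complex.exp (z ^ ((α : ℝ) : ℂ))
    let f₂ : ℂ → ℂ := fun z => z ^ ((((1 - α) / 2 : ℝ) : ℂ)) * Complex.exp (-(z ^ ((α : ℝ) : ℂ)))
    (∀ z ∈ H, f₁ z ≠ 0 ∧ f₂ z ≠ 0) ∧
    (∀ z ∈ H, deriv (deriv f₁) z + a z * f₁ z = 0) ∧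
    (∀ z ∈ H, deriv (deriv f₂) z + a z * f₂ z = 0) ∧
    (∀ c₁ c₂ : ℂ, (∀ z ∈ H, c₁ * f₁ z + c₂ * f₂ z = 0) → c₁ = 0 ∧ c₂ = 0) := by
  intro H a f₁ f₂
  have hslit : ∀ z ∈ H, z ∈ slitPlane := fun z hz => Or.inl hz
  have hf₁ : f₁ = fun w => w ^ ((1 - (α : ℂ)) / 2) * exp (1 * w ^ (α : ℂ)) := by
    funext w; simp only [f₁, one_mul]; push_cast; rfl
  have hf₂ : f₂ = fun w => w ^ ((1 - (α : ℂ)) / 2) * exp (-1 * w ^ (α : ℂ)) := by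
    funext w; simp only [f₂, neg_one_mul]; push_cast; rfl
  have hne : ∀ z ∈ H, ∀ w : ℂ, z ^ w ≠ 0 :=
    fun z hz w => cpow_ne_zero_iff.2 (Or.inl (slitPlane_ne_zero (hslit z hz)))
  refine ⟨fun z hz => ⟨mul_ne_zero (hne z hz _) (exp_ne_zero _),
    mul_ne_zero (hne z hz _) (exp_ne_zero _)⟩, ?_, ?_, ?_⟩
  · intro z hz
    rw [hf₁, deriv_deriv_cpow_mul_exp_cpow (one_pow 2) (hslit z hz)]
    simp only [a]; push_cast; ring
  · intro z hz
    rw [hf₂, deriv_deriv_cpow_mul_exp_cpow neg_one_sq (hslit z hz)]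
    simp only [a]; push_cast; ring
  · intro c₁ c₂ h
    have h2 : (2 : ℂ) ∈ H := by simp [H]
    have hpow : (2 : ℂ) ^ (α : ℂ) = ((2 ^ α : ℝ) : ℂ) := by
      rw [ofReal_cpow zero_le_two]; norm_num
    refine eq_zero_of_mul_exp_add_mul_exp_neg (s := 1) (t := (2 : ℂ) ^ (α : ℂ)) ?_ ?_ ?_
    · have hlt : 2 < 2 * (2 : ℝ) ^ α := by
        linarith [Real.one_lt_rpow one_lt_two (zero_lt_one.trans hα)]
      rw [hpow, mul_one, ← ofReal_ofNat, ← ofReal_mul, ← ofReal_exp, ← ofReal_exp]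
      exact ofReal_injective.ne (Real.exp_lt_exp.2 hlt).ne
    · simpa [f₁, f₂] using h 1 (by simp [H])
    · refine (mul_eq_zero.1 ?_).resolve_left (hne 2 h2 (((1 - α) / 2 : ℝ) : ℂ))
      linear_combination h 2 h2
end

section
/- For the map T(z) = ζ(1 − (1 − z·conj(ζ))^α) with ζ on the unit circle and 0 < α < 1, T is holomorphic and injective on the unit disc, T(𝔻) ⊂ 𝔻, and |T'(T^{-1}(z))| = α·|ζ − z|^{1 − 1/α} for all z ∈ T(𝔻). -/
/-!
In polar coordinates the disc `‖1 - u‖ < 1` is `{r e^{iθ} : r < 2 cos θ}`. Raising to the power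
`0 < α ≤ 1` sends `r e^{iθ}` to `r^α e^{iαθ}`, and weighted AM–GM together with the concavity of
`cos` on `[-π/2, π/2]` gives `r^α < (2 cos θ)^α ≤ 2 cos (αθ)`, so `u ↦ u^α` preserves that disc.
Since `|α arg u| ≤ π`, the power `1/α` undoes it, which gives injectivity. The map `T` is this
power conjugated by the affine isometries `z ↦ 1 - z ζ̄` and `v ↦ ζ (1 - v)`, and the derivative
identity follows from `T' = α u^(α-1)` and `ζ - T = ζ u^α` with `u = 1 - z ζ̄`.
-/

open Complex ComplexConjugate Real

theorem Real.cos_rpow_le_cos_mul {θ a : ℝ} (hθ : θ ∈ Set.Icc (-(π / 2)) (π / 2))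
    (ha₀ : 0 ≤ a) (ha₁ : a ≤ 1) : cos θ ^ a ≤ cos (a * θ) := by
  have h0 : (0 : ℝ) ∈ Set.Icc (-(π / 2)) (π / 2) := by constructor <;> linarith [pi_pos]
  calc cos θ ^ a = cos θ ^ a * 1 ^ (1 - a) := by simp
    _ ≤ a * cos θ + (1 - a) * 1 :=
      geom_mean_le_arith_mean2_weighted ha₀ (sub_nonneg.2 ha₁) (cos_nonneg_of_mem_Icc hθ)
        zero_le_one (by ring)
    _ ≤ cos (a * θ) := by
      simpa using strictConcaveOn_cos_Icc.concaveOn.2 hθ h0 ha₀ (sub_nonneg.2 ha₁) (by ring)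

namespace Complex

theorem norm_one_sub_lt_one_iff {u : ℂ} : ‖1 - u‖ < 1 ↔ ‖u‖ ^ 2 < 2 * u.re := by
  have h : ‖1 - u‖ ^ 2 = 1 - 2 * u.re + ‖u‖ ^ 2 := by
    simp only [Complex.sq_norm, normSq_apply, sub_re, sub_im, one_re, one_im]
    ring
  rw [← sq_lt_one_iff₀ (norm_nonneg _), h]
  constructor <;> intro <;> linarith

theorem norm_one_sub_cpow_lt_one {u : ℂ} {a : ℝ} (ha₀ : 0 < a) (ha₁ : a ≤ 1)
    (hu : ‖1 - u‖ < 1) : ‖1 - u ^ (a : ℂ)‖ < 1 := by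
  rw [norm_one_sub_lt_one_iff] at hu ⊢
  have hr : 0 < ‖u‖ := norm_pos_iff.2 (by rintro rfl; simp at hu)
  have harg : arg u ∈ Set.Icc (-(π / 2)) (π / 2) :=
    abs_le.1 (abs_arg_le_pi_div_two_iff.2 (by nlinarith [sq_nonneg ‖u‖]))
  have hpolar : ‖u‖ < 2 * Real.cos (arg u) := by
    rw [← norm_mul_cos_arg] at hu
    nlinarith
  have hpow : ‖u‖ ^ a < 2 * Real.cos (a * arg u) :=
    calc ‖u‖ ^ a < (2 * Real.cos (arg u)) ^ a := rpow_lt_rpow (norm_nonneg _) hpolar ha₀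
      _ = 2 ^ a * Real.cos (arg u) ^ a := mul_rpow zero_le_two (Real.cos_nonneg_of_mem_Icc harg)
      _ ≤ 2 ^ (1 : ℝ) * Real.cos (a * arg u) :=
        mul_le_mul (rpow_le_rpow_of_exponent_le one_le_two ha₁)
          (cos_rpow_le_cos_mul harg ha₀.le ha₁)
          (rpow_nonneg (Real.cos_nonneg_of_mem_Icc harg) a) (by positivity)
      _ = 2 * Real.cos (a * arg u) := by rw [rpow_one]
  have hra : 0 < ‖u‖ ^ a := rpow_pos_of_pos hr a
  rw [norm_cpow_real, cpow_ofReal_re, mul_comm (arg u)]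
  nlinarith

theorem cpow_ofReal_cpow_inv {a : ℝ} (ha₀ : 0 < a) (ha₁ : a ≤ 1) (u : ℂ) :
    (u ^ (a : ℂ)) ^ (a : ℂ)⁻¹ = u := by
  have him : (log u * a).im = a * arg u := by simp [log_im, mul_comm]
  have h₁ := neg_pi_lt_arg u
  have h₂ := arg_le_pi u
  rw [← cpow_mul _ (by rw [him]; nlinarith [pi_pos]) (by rw [him]; nlinarith [pi_pos]),
    mul_inv_cancel₀ (ofReal_ne_zero.2 ha₀.ne'), cpow_one]

theorem cpow_ofReal_injective {a : ℝ} (ha₀ : 0 < a) (ha₁ : a ≤ 1) :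
    Function.Injective fun u : ℂ => u ^ (a : ℂ) :=
  Function.LeftInverse.injective (g := fun v => v ^ (a : ℂ)⁻¹) (cpow_ofReal_cpow_inv ha₀ ha₁)

end Complex

noncomputable def stolzMap (ζ : ℂ) (α : ℝ) (z : ℂ) : ℂ :=
  ζ * (1 - (1 - z * conj ζ) ^ (α : ℂ))

section StolzMap

variable {ζ : ℂ} {α : ℝ}

theorem stolzMap_injective (hζ : ζ ≠ 0) (hα₀ : 0 < α) (hα₁ : α ≤ 1) :
    Function.Injective (stolzMap ζ α) := by
  intro z w h
  have hpow := cpow_ofReal_injective hα₀ hα₁ (sub_right_injective (mul_left_cancel₀ hζ h))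
  exact mul_right_cancel₀ ((map_ne_zero _).2 hζ) (sub_right_injective hpow)

theorem norm_one_sub_one_sub_mul_conj (hζ : ‖ζ‖ = 1) (z : ℂ) :
    ‖1 - (1 - z * conj ζ)‖ = ‖z‖ := by
  rw [sub_sub_cancel, norm_mul, norm_conj, hζ, mul_one]

theorem stolzMap_mapsTo_ball (hζ : ‖ζ‖ = 1) (hα₀ : 0 < α) (hα₁ : α ≤ 1) :
    Set.MapsTo (stolzMap ζ α) (Metric.ball 0 1) (Metric.ball 0 1) := by
  intro z hz
  rw [mem_ball_zero_iff] at hz ⊢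
  rw [stolzMap, norm_mul, hζ, one_mul]
  exact norm_one_sub_cpow_lt_one hα₀ hα₁ ((norm_one_sub_one_sub_mul_conj hζ z).trans_lt hz)

theorem one_sub_mul_conj_mem_slitPlane (hζ : ‖ζ‖ = 1) {z : ℂ} (hz : ‖z‖ < 1) :
    1 - z * conj ζ ∈ slitPlane := by
  simpa [sub_eq_add_neg] using mem_slitPlane_of_norm_lt_one (z := -(z * conj ζ)) (by simpa [hζ])

theorem hasDerivAt_stolzMap (hζ : ‖ζ‖ = 1) {z : ℂ} (hz : 1 - z * conj ζ ∈ slitPlane) :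
    HasDerivAt (stolzMap ζ α) (α * (1 - z * conj ζ) ^ ((α : ℂ) - 1)) z := by
  have hinner : HasDerivAt (fun w : ℂ => 1 - w * conj ζ) (-conj ζ) z := by
    simpa using ((hasDerivAt_id z).mul_const (conj ζ)).const_sub 1
  have hζζ : ζ * conj ζ = 1 := by
    rw [mul_conj, normSq_eq_norm_sq, hζ]
    norm_num
  refine (((hinner.cpow_const hz).const_sub 1).const_mul ζ).congr_deriv ?_
  linear_combination (α * (1 - z * conj ζ) ^ ((α : ℂ) - 1)) * hζζ

theorem norm_deriv_stolzMap (hζ : ‖ζ‖ = 1) (hα₀ : 0 < α) {z : ℂ} (hz : ‖z‖ < 1) :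
    ‖deriv (stolzMap ζ α) z‖ = α * ‖ζ - stolzMap ζ α z‖ ^ (1 - 1 / α) := by
  set u := 1 - z * conj ζ
  have hsub : ζ - stolzMap ζ α z = ζ * u ^ (α : ℂ) := by
    rw [stolzMap]
    ring
  have hexp : (α : ℂ) - 1 = ((α - 1 : ℝ) : ℂ) := by push_cast; ring
  rw [(hasDerivAt_stolzMap hζ (one_sub_mul_conj_mem_slitPlane hζ hz)).deriv, hsub, norm_mul,
    norm_mul, hζ, one_mul, norm_real, norm_of_nonneg hα₀.le, hexp, norm_cpow_real,
    norm_cpow_real, ← rpow_mul (norm_nonneg u)]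
  congr 2
  field_simp

end StolzMap

theorem stolz_angle_map (ζ : ℂ) (hζ : ‖ζ‖ = 1) (α : ℝ)
    (hα₀ : 0 < α) (hα₁ : α < 1) :
    let T : ℂ → ℂ := fun z => ζ * (1 - (1 - z * (starRingEnd ℂ) ζ) ^ ((α : ℝ) : ℂ))
    DifferentiableOn ℂ T (Metric.ball 0 1) ∧
    Set.InjOn T (Metric.ball 0 1) ∧
    T '' Metric.ball 0 1 ⊆ Metric.ball 0 1 ∧
    (∀ w ∈ Metric.ball (0 : ℂ) 1,
      ‖deriv T w‖ = α * ‖ζ - T w‖ ^ ((1 - 1 / α : ℝ))) := by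
  have hζ0 : ζ ≠ 0 := norm_ne_zero_iff.1 (by rw [hζ]; exact one_ne_zero)
  refine ⟨fun z hz => ?_, (stolzMap_injective hζ0 hα₀ hα₁.le).injOn,
    (stolzMap_mapsTo_ball hζ hα₀ hα₁.le).image_subset, fun w hw => ?_⟩
  · have hz' : ‖z‖ < 1 := mem_ball_zero_iff.1 hz
    exact (hasDerivAt_stolzMap hζ (one_sub_mul_conj_mem_slitPlane hζ hz')).differentiableAt
      |>.differentiableWithinAt
  · exact norm_deriv_stolzMap hζ hα₀ (mem_ball_zero_iff.1 hw)
end
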